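/- arXiv:2401.09714 — 5 statements merged into one kernel-verified Lean document; each statement's English description precedes it below -/
import Mathlib

section
/- Let V and Q be Hilbert spaces, a : V × V → ℝ a continuous symmetric positive semi-definite bilinear form, b : V × Q → ℝ a continuous bilinear form, and c : Q × Q → ℝ a symmetric positive semi-definite bilinear form. Suppose there exist constants α, β, γ > 0 such that (i) α‖v‖² ≤ a(v,v) for all v in the kernel of the operator B induced by b, (ii) β‖q‖ ≤ sup_{v ≠ 0} b(v,q)/‖v‖ for all q ∈ Q, and (iii) γ‖u‖ ≤ sup_{(v,q) ≠ 0} (a(u,v) + b(u,q))/(‖v‖² + ‖q‖² + t²c(q,q))^{1/2} for all u ∈ V, where t ∈ [0,1] and Q is complete with respect to the norm (‖q‖² + t²c(q,q))^{1/2}. Then for every F ∈ V' and G ∈ Q' there exists a unique pair (u,p) ∈ V × Q satisfying a(u,v) + b(v,p) = F(v) for all v ∈ V and b(u,q) − t²c(p,q) = G(q) for all q ∈ Q, and moreover ‖u‖² + ‖p‖² + t²c(p,p) ≤ C(‖F‖_{V'}² + ‖G‖²) for a constant C depending only on the constants in the assumptions. -/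
/-!
Equip `V × Q` with the energy norm `‖(v, q)‖² = ‖v‖² + ‖q‖² + t² c(q, q)`; completeness of `Q`
in the weighted norm makes this a Hilbert space `X`. The problem is then `𝒜 x = ℓ` for the
symmetric bounded form `𝒜((u, p), (v, q)) = a(u, v) + b(v, p) + b(u, q) - t² c(p, q)` on `X`.
Testing `𝒜 x` against `(u, -p)`, `(v, 0)` and `(v, q)` and using respectively positivity,
the inf-sup condition for `b` and the Braess condition bounds `a(u, u) + t² c(p, p)`, `‖p‖` and
`‖u‖` by `‖𝒜 x‖` and `‖x‖`; together these give `‖x‖ ≤ K ‖𝒜 x‖`. A symmetric form bounded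
below in this sense is an isomorphism `X ≃ X'`, since the range of its Riesz operator is closed
and has trivial orthogonal complement.
-/

open scoped RealInnerProductSpace

theorem le_two_mul_of_sq_le {L S M : ℝ} (hL : 1 ≤ L) (hS : 0 ≤ S) (hM : 0 ≤ M)
    (h : M ^ 2 ≤ L * (S ^ 2 + S * M)) : M ≤ 2 * L * S := by
  by_contra! hlt
  have hM₀ : 0 < M := lt_of_le_of_lt (by positivity) hlt
  nlinarith [mul_lt_mul_of_pos_right hlt hM₀, mul_le_mul_of_nonneg_left hL (mul_nonneg hS hS)]

theorem sq_le_two_mul_add {x p q : ℝ} (hx : 0 ≤ x) (h : x ≤ p + q) :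
    x ^ 2 ≤ 2 * (p ^ 2 + q ^ 2) := by
  nlinarith [sq_nonneg (p - q)]

theorem sq_le_three_mul_add {x p q r : ℝ} (hx : 0 ≤ x) (h : x ≤ p + q + r) :
    x ^ 2 ≤ 3 * (p ^ 2 + q ^ 2 + r ^ 2) := by
  nlinarith [sq_nonneg (p - q), sq_nonneg (q - r), sq_nonneg (p - r)]

theorem mul_add_mul_le_sqrt_mul_sqrt (p q x y : ℝ) :
    p * x + q * y ≤ √(p ^ 2 + q ^ 2) * √(x ^ 2 + y ^ 2) := by
  rw [← Real.sqrt_mul (by positivity)]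
  exact Real.le_sqrt_of_sq_le (by nlinarith [sq_nonneg (p * y - q * x)])

theorem LinearMap.IsPosSemidef.abs_apply_le {M : Type*} [AddCommGroup M] [Module ℝ M]
    {c : M →ₗ[ℝ] M →ₗ[ℝ] ℝ} (hc : c.IsPosSemidef) (x y : M) :
    |c x y| ≤ √(c x x) * √(c y y) := by
  rw [← Real.sqrt_mul (hc.isNonneg.nonneg x)]
  exact Real.abs_le_sqrt
    (LinearMap.BilinForm.apply_sq_le_of_symm c hc.isNonneg.nonneg hc.isSymm x y)

theorem sqrt_apply_self_le {E : Type*} [NormedAddCommGroup E] [Module ℝ E]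
    {a : E →ₗ[ℝ] E →ₗ[ℝ] ℝ} {C : ℝ} (ha : ∀ u v, |a u v| ≤ C * ‖u‖ * ‖v‖) (v : E) :
    √(a v v) ≤ √C * ‖v‖ := by
  calc √(a v v) ≤ √(C * ‖v‖ ^ 2) :=
        Real.sqrt_le_sqrt (((le_abs_self _).trans (ha v v)).trans_eq (by ring))
    _ = √C * ‖v‖ := by rw [Real.sqrt_mul' C (sq_nonneg _), Real.sqrt_sq (norm_nonneg v)]

namespace ContinuousLinearMap

theorem surjective_of_isSymmetric_of_antilipschitz {𝕜 E : Type*} [RCLike 𝕜]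
    [NormedAddCommGroup E] [InnerProductSpace 𝕜 E] [CompleteSpace E] {T : E →L[𝕜] E}
    (hsymm : (T : E →ₗ[𝕜] E).IsSymmetric) {K : NNReal} (hT : AntilipschitzWith K T) :
    Function.Surjective T := by
  have hclosed : IsClosed (LinearMap.range (T : E →ₗ[𝕜] E) : Set E) :=
    hT.isClosed_range T.uniformContinuous
  have := hclosed.completeSpace_coe
  have hrange : (LinearMap.range (T : E →ₗ[𝕜] E))ᗮ = ⊥ := by
    rw [hsymm.orthogonal_range, LinearMap.ker_eq_bot]
    exact hT.injective
  change Function.Surjective (T : E →ₗ[𝕜] E)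
  rw [← LinearMap.range_eq_top, ← Submodule.orthogonal_eq_bot_iff]
  exact hrange

theorem bijective_of_symm_of_bounded_below {X : Type*} [NormedAddCommGroup X]
    [InnerProductSpace ℝ X] [CompleteSpace X] {A : X →L[ℝ] StrongDual ℝ X}
    (hsymm : ∀ x y, A x y = A y x) {K : ℝ} (hbound : ∀ x, ‖x‖ ≤ K * ‖A x‖) :
    Function.Bijective A := by
  set T := InnerProductSpace.continuousLinearMapOfBilin A
  have hAT : ⇑A = InnerProductSpace.toDual ℝ X ∘ T := by
    ext x y
    simp [T, InnerProductSpace.continuousLinearMapOfBilin_apply]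
  have hnorm (x : X) : ‖T x‖ = ‖A x‖ := by
    rw [hAT, Function.comp_apply, LinearIsometryEquiv.norm_map]
  have hTsymm : (T : X →ₗ[ℝ] X).IsSymmetric := fun x y => by
    rw [coe_coe, real_inner_comm (T y) x, InnerProductSpace.continuousLinearMapOfBilin_apply,
      InnerProductSpace.continuousLinearMapOfBilin_apply, hsymm]
  have hTanti : AntilipschitzWith K.toNNReal T :=
    T.antilipschitz_of_bound fun x => by
      rw [hnorm]
      exact (hbound x).trans (by gcongr; exact Real.le_coe_toNNReal K)
  rw [hAT]
  exact (InnerProductSpace.toDual ℝ X).bijective.comp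
    ⟨hTanti.injective, surjective_of_isSymmetric_of_antilipschitz hTsymm hTanti⟩

end ContinuousLinearMap

noncomputable def weightedNorm {Q : Type*} [NormedAddCommGroup Q] [Module ℝ Q]
    (c : Q →ₗ[ℝ] Q →ₗ[ℝ] ℝ) (q : Q) : ℝ :=
  √(‖q‖ ^ 2 + c q q)

section WeightedNorm

variable {Q : Type*} [NormedAddCommGroup Q] [Module ℝ Q] (c : Q →ₗ[ℝ] Q →ₗ[ℝ] ℝ)

theorem weightedNorm_nonneg (q : Q) : 0 ≤ weightedNorm c q := Real.sqrt_nonneg _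

theorem sqrt_apply_le_weightedNorm (q : Q) : √(c q q) ≤ weightedNorm c q :=
  Real.sqrt_le_sqrt (le_add_of_nonneg_left (sq_nonneg _))

variable [hc : Fact c.IsPosSemidef]

theorem weightedNorm_sq (q : Q) : weightedNorm c q ^ 2 = ‖q‖ ^ 2 + c q q :=
  Real.sq_sqrt (add_nonneg (sq_nonneg _) (hc.out.isNonneg.nonneg q))

theorem norm_le_weightedNorm (q : Q) : ‖q‖ ≤ weightedNorm c q :=
  Real.le_sqrt_of_sq_le (le_add_of_nonneg_right (hc.out.isNonneg.nonneg q))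

end WeightedNorm

/-- `V × Q`, to be given the inner product `⟪(u, p), (v, q)⟫ = ⟪u, v⟫ + ⟪p, q⟫ + c p q`. -/
def WeightedProd (V : Type*) {Q : Type*} [AddCommGroup Q] [Module ℝ Q]
    (_c : Q →ₗ[ℝ] Q →ₗ[ℝ] ℝ) : Type _ :=
  V × Q

namespace WeightedProd

section Algebra

variable {V Q : Type*} [AddCommGroup Q] [Module ℝ Q] {c : Q →ₗ[ℝ] Q →ₗ[ℝ] ℝ}

variable (c) in
def mk (v : V) (q : Q) : WeightedProd V c := (v, q)

@[simp]
theorem mk_fst (v : V) (q : Q) : (mk c v q).1 = v := rfl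

@[simp]
theorem mk_snd (v : V) (q : Q) : (mk c v q).2 = q := rfl

variable [AddCommGroup V] [Module ℝ V]

instance : AddCommGroup (WeightedProd V c) := inferInstanceAs (AddCommGroup (V × Q))

instance : Module ℝ (WeightedProd V c) := inferInstanceAs (Module ℝ (V × Q))

def saddleForm (a : V →ₗ[ℝ] V →ₗ[ℝ] ℝ) (b : V →ₗ[ℝ] Q →ₗ[ℝ] ℝ) (c : Q →ₗ[ℝ] Q →ₗ[ℝ] ℝ) :
    WeightedProd V c →ₗ[ℝ] WeightedProd V c →ₗ[ℝ] ℝ :=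
  let fst : WeightedProd V c →ₗ[ℝ] V := LinearMap.fst ℝ V Q
  let snd : WeightedProd V c →ₗ[ℝ] Q := LinearMap.snd ℝ V Q
  a.compl₁₂ fst fst + b.flip.compl₁₂ snd fst + b.compl₁₂ fst snd - c.compl₁₂ snd snd

variable {a : V →ₗ[ℝ] V →ₗ[ℝ] ℝ} {b : V →ₗ[ℝ] Q →ₗ[ℝ] ℝ}

@[simp]
theorem saddleForm_apply (x y : WeightedProd V c) :
    saddleForm a b c x y = a x.1 y.1 + b y.1 x.2 + b x.1 y.2 - c x.2 y.2 :=
  rfl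

theorem saddleForm_comm (ha : a.IsSymm) (hc : c.IsSymm) (x y : WeightedProd V c) :
    saddleForm a b c x y = saddleForm a b c y x := by
  simp only [saddleForm_apply, ← ha.eq x.1, ← hc.eq x.2, RingHom.id_apply]
  ring

variable (c) in
def coprod (F : V →ₗ[ℝ] ℝ) (G : Q →ₗ[ℝ] ℝ) : WeightedProd V c →ₗ[ℝ] ℝ :=
  F.coprod G

@[simp]
theorem coprod_apply (F : V →ₗ[ℝ] ℝ) (G : Q →ₗ[ℝ] ℝ) (x : WeightedProd V c) :
    coprod c F G x = F x.1 + G x.2 :=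
  rfl

theorem saddleForm_eq_iff {F : V →ₗ[ℝ] ℝ} {G : Q →ₗ[ℝ] ℝ} {x : WeightedProd V c} :
    (∀ y, saddleForm a b c x y = coprod c F G y) ↔
      (∀ v, a x.1 v + b v x.2 = F v) ∧ (∀ q, b x.1 q - c x.2 q = G q) := by
  refine ⟨fun h => ⟨fun v => ?_, fun q => ?_⟩, fun ⟨hF, hG⟩ y => ?_⟩
  · simpa using h (mk c v 0)
  · simpa using h (mk c 0 q)
  · rw [saddleForm_apply, coprod_apply, ← hF, ← hG]
    ring

end Algebra

section Normed

variable {V Q : Type*} [NormedAddCommGroup V] [InnerProductSpace ℝ V]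
  [NormedAddCommGroup Q] [InnerProductSpace ℝ Q] (c : Q →ₗ[ℝ] Q →ₗ[ℝ] ℝ) [hc : Fact c.IsPosSemidef]

noncomputable abbrev innerCore : InnerProductSpace.Core ℝ (WeightedProd V c) where
  inner x y := ⟪x.1, y.1⟫ + ⟪x.2, y.2⟫ + c x.2 y.2
  conj_inner_symm x y := by
    simp only [conj_trivial, real_inner_comm x.1, real_inner_comm x.2, ← hc.out.isSymm.eq x.2,
      RingHom.id_apply]
  re_inner_nonneg x := by
    simp only [RCLike.re_to_real]
    exact add_nonneg (add_nonneg real_inner_self_nonneg real_inner_self_nonneg)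
      (hc.out.isNonneg.nonneg x.2)
  add_left x y z := by
    change ⟪x.1 + y.1, z.1⟫ + ⟪x.2 + y.2, z.2⟫ + c (x.2 + y.2) z.2 = _
    simp only [inner_add_left, map_add, LinearMap.add_apply]
    ring
  smul_left x y r := by
    change ⟪r • x.1, y.1⟫ + ⟪r • x.2, y.2⟫ + c (r • x.2) y.2 = _
    simp only [real_inner_smul_left, map_smul, LinearMap.smul_apply, smul_eq_mul, conj_trivial]
    ring
  definite x hx := by
    change ⟪x.1, x.1⟫ + ⟪x.2, x.2⟫ + c x.2 x.2 = 0 at hx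
    have h₁ := real_inner_self_nonneg (x := x.1)
    have h₂ := real_inner_self_nonneg (x := x.2)
    have h₃ := hc.out.isNonneg.nonneg x.2
    have e₁ : ⟪x.1, x.1⟫ = 0 := by linarith
    have e₂ : ⟪x.2, x.2⟫ = 0 := by linarith
    exact Prod.ext (inner_self_eq_zero.mp e₁) (inner_self_eq_zero.mp e₂)

noncomputable instance : NormedAddCommGroup (WeightedProd V c) :=
  (innerCore c).toNormedAddCommGroup

noncomputable instance : InnerProductSpace ℝ (WeightedProd V c) :=
  .ofCore (innerCore c).toCore

theorem inner_def (x y : WeightedProd V c) : ⟪x, y⟫ = ⟪x.1, y.1⟫ + ⟪x.2, y.2⟫ + c x.2 y.2 := rfl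

theorem norm_sq (x : WeightedProd V c) : ‖x‖ ^ 2 = ‖x.1‖ ^ 2 + ‖x.2‖ ^ 2 + c x.2 x.2 := by
  rw [← real_inner_self_eq_norm_sq, inner_def, real_inner_self_eq_norm_sq,
    real_inner_self_eq_norm_sq]

theorem norm_eq (x : WeightedProd V c) : ‖x‖ = √(‖x.1‖ ^ 2 + ‖x.2‖ ^ 2 + c x.2 x.2) := by
  rw [← norm_sq, Real.sqrt_sq (norm_nonneg x)]

theorem norm_sq_eq_add_weightedNorm_sq (x : WeightedProd V c) :
    ‖x‖ ^ 2 = ‖x.1‖ ^ 2 + weightedNorm c x.2 ^ 2 := by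
  rw [norm_sq, weightedNorm_sq, add_assoc]

theorem norm_fst_le (x : WeightedProd V c) : ‖x.1‖ ≤ ‖x‖ := by
  rw [← pow_le_pow_iff_left₀ (norm_nonneg _) (norm_nonneg _) two_ne_zero,
    norm_sq_eq_add_weightedNorm_sq]
  nlinarith

theorem weightedNorm_snd_le (x : WeightedProd V c) : weightedNorm c x.2 ≤ ‖x‖ := by
  rw [← pow_le_pow_iff_left₀ (weightedNorm_nonneg c x.2) (norm_nonneg _) two_ne_zero,
    norm_sq_eq_add_weightedNorm_sq]
  nlinarith

theorem norm_snd_le (x : WeightedProd V c) : ‖x.2‖ ≤ ‖x‖ :=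
  (norm_le_weightedNorm c x.2).trans (weightedNorm_snd_le c x)

theorem sqrt_apply_snd_le (x : WeightedProd V c) : √(c x.2 x.2) ≤ ‖x‖ :=
  (sqrt_apply_le_weightedNorm c x.2).trans (weightedNorm_snd_le c x)

theorem norm_le_add (x : WeightedProd V c) : ‖x‖ ≤ ‖x.1‖ + weightedNorm c x.2 := by
  rw [← pow_le_pow_iff_left₀ (norm_nonneg _)
    (add_nonneg (norm_nonneg _) (weightedNorm_nonneg c _)) two_ne_zero,
    norm_sq_eq_add_weightedNorm_sq]
  nlinarith [norm_nonneg x.1, weightedNorm_nonneg c x.2]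

theorem completeSpace [CompleteSpace V]
    (hQ : ∀ f : ℕ → Q, (∀ ε > (0 : ℝ), ∃ N, ∀ m ≥ N, ∀ n ≥ N, weightedNorm c (f m - f n) < ε) →
      ∃ q : Q, ∀ ε > (0 : ℝ), ∃ N, ∀ n ≥ N, weightedNorm c (f n - q) < ε) :
    CompleteSpace (WeightedProd V c) := by
  refine Metric.complete_of_cauchySeq_tendsto fun f hf => ?_
  have hfst : CauchySeq fun n => (f n).1 := Metric.cauchySeq_iff.2 fun ε hε =>
    (Metric.cauchySeq_iff.1 hf ε hε).imp fun N hN m hm n hn => by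
      rw [dist_eq_norm]
      exact (norm_fst_le c (f m - f n)).trans_lt (dist_eq_norm (f m) (f n) ▸ hN m hm n hn)
  obtain ⟨u, hu⟩ := cauchySeq_tendsto_of_complete hfst
  obtain ⟨q, hq⟩ := hQ (fun n => (f n).2) fun ε hε =>
    (Metric.cauchySeq_iff.1 hf ε hε).imp fun N hN m hm n hn =>
      (weightedNorm_snd_le c (f m - f n)).trans_lt (dist_eq_norm (f m) (f n) ▸ hN m hm n hn)
  have hq' : Filter.Tendsto (fun n => weightedNorm c ((f n).2 - q)) Filter.atTop (nhds 0) :=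
    Metric.tendsto_atTop.2 fun ε hε => (hq ε hε).imp fun N hN n hn => by
      rw [Real.dist_0_eq_abs, abs_of_nonneg (weightedNorm_nonneg c _)]
      exact hN n hn
  refine ⟨mk c u q, tendsto_iff_norm_sub_tendsto_zero.2 ?_⟩
  have hsum := (tendsto_iff_norm_sub_tendsto_zero.1 hu).add hq'
  rw [add_zero] at hsum
  exact squeeze_zero (fun n => norm_nonneg _) (fun n => norm_le_add c (f n - mk c u q)) hsum

theorem abs_add_le_sqrt_mul_norm {F : StrongDual ℝ V} {G : Q → ℝ} {NG : ℝ}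
    (hG : ∀ q, |G q| ≤ NG * weightedNorm c q) (x : WeightedProd V c) :
    |F x.1 + G x.2| ≤ √(‖F‖ ^ 2 + NG ^ 2) * ‖x‖ := by
  have hx : ‖x‖ = √(‖x.1‖ ^ 2 + weightedNorm c x.2 ^ 2) := by
    rw [← norm_sq_eq_add_weightedNorm_sq, Real.sqrt_sq (norm_nonneg x)]
  calc |F x.1 + G x.2| ≤ ‖F‖ * ‖x.1‖ + NG * weightedNorm c x.2 :=
        (abs_add_le _ _).trans (add_le_add (F.le_opNorm x.1) (hG x.2))
    _ ≤ √(‖F‖ ^ 2 + NG ^ 2) * ‖x‖ := hx ▸ mul_add_mul_le_sqrt_mul_sqrt _ _ _ _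

end Normed

section SaddlePoint

variable {V Q : Type*} [NormedAddCommGroup V] [InnerProductSpace ℝ V]
  [NormedAddCommGroup Q] [InnerProductSpace ℝ Q] {a : V →ₗ[ℝ] V →ₗ[ℝ] ℝ}
  {b : V →ₗ[ℝ] Q →ₗ[ℝ] ℝ} {c : Q →ₗ[ℝ] Q →ₗ[ℝ] ℝ} [hc : Fact c.IsPosSemidef] {Ca Cb : ℝ}

theorem abs_saddleForm_le (ha : ∀ u v, |a u v| ≤ Ca * ‖u‖ * ‖v‖)
    (hb : ∀ v q, |b v q| ≤ Cb * ‖v‖ * ‖q‖) (x y : WeightedProd V c) :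
    |saddleForm a b c x y| ≤ (|Ca| + 2 * |Cb| + 1) * ‖x‖ * ‖y‖ := by
  have hmono {f C m n : ℝ} {u v : WeightedProd V c} (h : |f| ≤ C * m * n) (hm₀ : 0 ≤ m)
      (hn₀ : 0 ≤ n) (hm : m ≤ ‖u‖) (hn : n ≤ ‖v‖) : |f| ≤ |C| * ‖u‖ * ‖v‖ :=
    h.trans (by gcongr; exact le_abs_self C)
  have h₁ := hmono (ha x.1 y.1) (norm_nonneg _) (norm_nonneg _) (norm_fst_le c x) (norm_fst_le c y)
  have h₂ := hmono (hb y.1 x.2) (norm_nonneg _) (norm_nonneg _) (norm_fst_le c y) (norm_snd_le c x)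
  have h₃ := hmono (hb x.1 y.2) (norm_nonneg _) (norm_nonneg _) (norm_fst_le c x) (norm_snd_le c y)
  have h₄ : |c x.2 y.2| ≤ ‖x‖ * ‖y‖ := (hc.out.abs_apply_le x.2 y.2).trans
    (mul_le_mul (sqrt_apply_snd_le c x) (sqrt_apply_snd_le c y) (Real.sqrt_nonneg _)
      (norm_nonneg _))
  rw [saddleForm_apply]
  have := abs_sub (a x.1 y.1 + b y.1 x.2 + b x.1 y.2) (c x.2 y.2)
  have := abs_add_three (a x.1 y.1) (b y.1 x.2) (b x.1 y.2)
  nlinarith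

variable {x : WeightedProd V c} {S : ℝ}

theorem energy_le_of_saddleForm_le (hS : ∀ y, saddleForm a b c x y ≤ S * ‖y‖) :
    a x.1 x.1 + c x.2 x.2 ≤ S * ‖x‖ := by
  have hnorm : ‖mk c x.1 (-x.2)‖ = ‖x‖ := by
    simp only [norm_eq, mk_fst, mk_snd, norm_neg, map_neg, LinearMap.neg_apply, neg_neg]
  simpa [hnorm] using hS (mk c x.1 (-x.2))

theorem mul_norm_snd_le_of_saddleForm_le {β : ℝ} (ha : a.IsPosSemidef)
    (ha_cont : ∀ u v, |a u v| ≤ Ca * ‖u‖ * ‖v‖)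
    (hinfsup : ∀ q : Q, β * ‖q‖ ≤ ⨆ v : {v : V // v ≠ 0}, b v.1 q / ‖v.1‖)
    (hS₀ : 0 ≤ S) (hS : ∀ y, saddleForm a b c x y ≤ S * ‖y‖) :
    β * ‖x.2‖ ≤ S + √Ca * √(a x.1 x.1) := by
  refine (hinfsup x.2).trans (Real.iSup_le (fun ⟨v, hv⟩ => ?_) (by positivity))
  rw [div_le_iff₀ (norm_pos_iff.2 hv)]
  have hnorm : ‖mk c v 0‖ = ‖v‖ := by
    simp [norm_eq]
  have h := hS (mk c v 0)
  simp only [saddleForm_apply, hnorm, mk_fst, mk_snd, map_zero, sub_zero, add_zero] at h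
  have hav : |a x.1 v| ≤ √(a x.1 x.1) * (√Ca * ‖v‖) :=
    (ha.abs_apply_le x.1 v).trans (by gcongr; exact sqrt_apply_self_le ha_cont v)
  nlinarith [neg_abs_le (a x.1 v)]

theorem mul_norm_fst_le_of_saddleForm_le {γ : ℝ} (hb_cont : ∀ v q, |b v q| ≤ Cb * ‖v‖ * ‖q‖)
    (hbraess : ∀ u : V, γ * ‖u‖ ≤
      ⨆ vq : {vq : V × Q // vq ≠ 0},
        (a u vq.1.1 + b u vq.1.2) / √(‖vq.1.1‖ ^ 2 + ‖vq.1.2‖ ^ 2 + c vq.1.2 vq.1.2))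
    (hS₀ : 0 ≤ S) (hS : ∀ y, saddleForm a b c x y ≤ S * ‖y‖) :
    γ * ‖x.1‖ ≤ S + |Cb| * ‖x.2‖ + √(c x.2 x.2) := by
  refine (hbraess x.1).trans (Real.iSup_le (fun ⟨y, hy⟩ => ?_) (by positivity))
  let y' : WeightedProd V c := y
  rw [← norm_eq c y', div_le_iff₀ (norm_pos_iff.2 (show y' ≠ 0 from hy))]
  have h := hS y'
  have hb : |b y'.1 x.2| ≤ |Cb| * ‖x.2‖ * ‖y'‖ :=
    (hb_cont _ _).trans (by rw [mul_right_comm]; gcongr; exacts [le_abs_self Cb, norm_fst_le c y'])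
  have hc' : |c x.2 y'.2| ≤ √(c x.2 x.2) * ‖y'‖ :=
    (hc.out.abs_apply_le _ _).trans (by gcongr; exact sqrt_apply_snd_le c y')
  rw [saddleForm_apply] at h
  nlinarith [neg_abs_le (b y'.1 x.2), le_abs_self (c x.2 y'.2)]

theorem exists_norm_le_mul_of_saddleForm_le {β γ : ℝ} (hβ : 0 < β) (hγ : 0 < γ)
    (ha : a.IsPosSemidef) (ha_cont : ∀ u v, |a u v| ≤ Ca * ‖u‖ * ‖v‖)
    (hb_cont : ∀ v q, |b v q| ≤ Cb * ‖v‖ * ‖q‖)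
    (hinfsup : ∀ q : Q, β * ‖q‖ ≤ ⨆ v : {v : V // v ≠ 0}, b v.1 q / ‖v.1‖)
    (hbraess : ∀ u : V, γ * ‖u‖ ≤
      ⨆ vq : {vq : V × Q // vq ≠ 0},
        (a u vq.1.1 + b u vq.1.2) / √(‖vq.1.1‖ ^ 2 + ‖vq.1.2‖ ^ 2 + c vq.1.2 vq.1.2)) :
    ∃ K > 0, ∀ (x : WeightedProd V c) (S : ℝ), 0 ≤ S →
      (∀ y, saddleForm a b c x y ≤ S * ‖y‖) → ‖x‖ ≤ K * S := by
  set P := 2 * (1 + √Ca ^ 2) / β ^ 2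
  set R := 3 * (1 + |Cb| ^ 2 * P) / γ ^ 2
  refine ⟨2 * (R + P + 1), by positivity, fun x S hS₀ hS => ?_⟩
  -- Squaring the three test-function estimates and using `a(u, u) + c(p, p) ≤ S ‖x‖` bounds
  -- `‖x‖²` by a multiple of `S² + S ‖x‖`.
  have hA₀ := ha.isNonneg.nonneg x.1
  have hC₀ := hc.out.isNonneg.nonneg x.2
  have hSM : 0 ≤ S * ‖x‖ := by positivity
  have henergy := energy_le_of_saddleForm_le hS
  have h₂ : ‖x.2‖ ^ 2 ≤ P * (S ^ 2 + S * ‖x‖) := by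
    have h := sq_le_two_mul_add (by positivity)
      (mul_norm_snd_le_of_saddleForm_le ha ha_cont hinfsup hS₀ hS)
    rw [mul_pow, mul_pow, Real.sq_sqrt hA₀] at h
    rw [div_mul_eq_mul_div, le_div_iff₀ (by positivity)]
    nlinarith [mul_le_mul_of_nonneg_left (show a x.1 x.1 ≤ S * ‖x‖ by linarith)
      (sq_nonneg √Ca)]
  have h₁ : ‖x.1‖ ^ 2 ≤ R * (S ^ 2 + S * ‖x‖) := by
    have h := sq_le_three_mul_add (by positivity)
      (mul_norm_fst_le_of_saddleForm_le hb_cont hbraess hS₀ hS)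
    rw [mul_pow, mul_pow, Real.sq_sqrt hC₀] at h
    rw [div_mul_eq_mul_div, le_div_iff₀ (by positivity)]
    nlinarith [mul_le_mul_of_nonneg_left h₂ (sq_nonneg |Cb|)]
  refine le_two_mul_of_sq_le (le_add_of_nonneg_left (by positivity)) hS₀ (norm_nonneg x) ?_
  rw [norm_sq]
  nlinarith

theorem exists_pos_existsUnique_saddleForm_eq_and_norm_le [CompleteSpace (WeightedProd V c)]
    {β γ : ℝ} (hβ : 0 < β) (hγ : 0 < γ)
    (ha : a.IsPosSemidef) (ha_cont : ∀ u v, |a u v| ≤ Ca * ‖u‖ * ‖v‖)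
    (hb_cont : ∀ v q, |b v q| ≤ Cb * ‖v‖ * ‖q‖)
    (hinfsup : ∀ q : Q, β * ‖q‖ ≤ ⨆ v : {v : V // v ≠ 0}, b v.1 q / ‖v.1‖)
    (hbraess : ∀ u : V, γ * ‖u‖ ≤
      ⨆ vq : {vq : V × Q // vq ≠ 0},
        (a u vq.1.1 + b u vq.1.2) / √(‖vq.1.1‖ ^ 2 + ‖vq.1.2‖ ^ 2 + c vq.1.2 vq.1.2)) :
    ∃ K > 0, ∀ ℓ : StrongDual ℝ (WeightedProd V c),
      (∃! x, ∀ y, saddleForm a b c x y = ℓ y) ∧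
        ∀ x, (∀ y, saddleForm a b c x y = ℓ y) → ‖x‖ ≤ K * ‖ℓ‖ := by
  obtain ⟨K, hK, hbound⟩ :=
    exists_norm_le_mul_of_saddleForm_le hβ hγ ha ha_cont hb_cont hinfsup hbraess
  let A : WeightedProd V c →L[ℝ] StrongDual ℝ (WeightedProd V c) :=
    (saddleForm a b c).mkContinuous₂ _ (abs_saddleForm_le ha_cont hb_cont)
  have hA_apply (x y : WeightedProd V c) : A x y = saddleForm a b c x y := rfl
  have hKA (x : WeightedProd V c) : ‖x‖ ≤ K * ‖A x‖ :=
    hbound x _ (norm_nonneg (A x)) fun y => ((A x).le_opNorm y).trans' (le_abs_self _)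
  have hA : Function.Bijective A := ContinuousLinearMap.bijective_of_symm_of_bounded_below
    (saddleForm_comm ha.isSymm hc.out.isSymm) hKA
  refine ⟨K, hK, fun ℓ => ⟨?_, fun x hx => ?_⟩⟩
  · simpa only [ContinuousLinearMap.ext_iff, hA_apply] using hA.existsUnique ℓ
  · rw [← show A x = ℓ from ContinuousLinearMap.ext hx]
    exact hKA x

end SaddlePoint

end WeightedProd

theorem stmt_0_general
    {V Q : Type*}
    [NormedAddCommGroup V] [InnerProductSpace ℝ V] [CompleteSpace V]
    [NormedAddCommGroup Q] [InnerProductSpace ℝ Q]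
    (a : V →ₗ[ℝ] V →ₗ[ℝ] ℝ) (b : V →ₗ[ℝ] Q →ₗ[ℝ] ℝ) (c : Q →ₗ[ℝ] Q →ₗ[ℝ] ℝ)
    (Ca Cb : ℝ)
    (ha_cont : ∀ u v, |a u v| ≤ Ca * ‖u‖ * ‖v‖)
    (ha_symm : ∀ u v, a u v = a v u)
    (ha_psd : ∀ v, 0 ≤ a v v)
    (hb_cont : ∀ v q, |b v q| ≤ Cb * ‖v‖ * ‖q‖)
    (hc_symm : ∀ p q, c p q = c q p)
    (hc_psd : ∀ q, 0 ≤ c q q)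
    (t : ℝ)
    (wnorm : Q → ℝ)
    (hw : ∀ q, wnorm q = Real.sqrt (‖q‖ ^ 2 + t ^ 2 * c q q))
    -- Q is complete with respect to the weighted norm
    (hQcomplete : ∀ f : ℕ → Q,
      (∀ ε > (0 : ℝ), ∃ N, ∀ m ≥ N, ∀ n ≥ N, wnorm (f m - f n) < ε) →
      ∃ q : Q, ∀ ε > (0 : ℝ), ∃ N, ∀ n ≥ N, wnorm (f n - q) < ε)
    (β γ : ℝ) (hβ : 0 < β) (hγ : 0 < γ)
    -- (ii) inf-sup condition for b
    (hinfsup : ∀ q : Q, β * ‖q‖ ≤ ⨆ v : {v : V // v ≠ 0}, b v.1 q / ‖v.1‖)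
    -- (iii) Braess condition
    (hbraess : ∀ u : V, γ * ‖u‖ ≤
      ⨆ vq : {vq : V × Q // vq ≠ 0},
        (a u vq.1.1 + b u vq.1.2) /
          Real.sqrt (‖vq.1.1‖ ^ 2 + ‖vq.1.2‖ ^ 2 + t ^ 2 * c vq.1.2 vq.1.2)) :
    ∃ C : ℝ, 0 < C ∧
      ∀ (F : V →L[ℝ] ℝ) (G : Q → ℝ), IsLinearMap ℝ G →
      ∀ NG : ℝ, (∀ q, |G q| ≤ NG * wnorm q) →
      (∃! up : V × Q,
          (∀ v, a up.1 v + b v up.2 = F v) ∧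
          (∀ q, b up.1 q - t ^ 2 * c up.2 q = G q)) ∧
      (∀ up : V × Q,
          ((∀ v, a up.1 v + b v up.2 = F v) ∧
           (∀ q, b up.1 q - t ^ 2 * c up.2 q = G q)) →
          ‖up.1‖ ^ 2 + ‖up.2‖ ^ 2 + t ^ 2 * c up.2 up.2 ≤ C * (‖F‖ ^ 2 + NG ^ 2)) := by
  set c' := t ^ 2 • c
  have : Fact c'.IsPosSemidef :=
    ⟨⟨⟨fun p q => by simp [c', hc_symm p q]⟩, ⟨fun q => mul_nonneg (sq_nonneg t) (hc_psd q)⟩⟩⟩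
  obtain rfl : wnorm = weightedNorm c' := funext hw
  have := WeightedProd.completeSpace (V := V) c' hQcomplete
  obtain ⟨K, hK, hsolve⟩ := WeightedProd.exists_pos_existsUnique_saddleForm_eq_and_norm_le (c := c')
    hβ hγ ⟨⟨ha_symm⟩, ⟨ha_psd⟩⟩ ha_cont hb_cont hinfsup hbraess
  refine ⟨K ^ 2, by positivity, fun F G hG NG hNG => ?_⟩
  let L : StrongDual ℝ (WeightedProd V c') := (WeightedProd.coprod c' F (hG.mk' G)).mkContinuous _
    (WeightedProd.abs_add_le_sqrt_mul_norm c' hNG)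
  have hsol (x : WeightedProd V c') : ((∀ v, a x.1 v + b v x.2 = F v) ∧
      (∀ q, b x.1 q - t ^ 2 * c x.2 q = G q)) ↔ ∀ y, WeightedProd.saddleForm a b c' x y = L y :=
    (WeightedProd.saddleForm_eq_iff (F := (F : V →ₗ[ℝ] ℝ)) (G := hG.mk' G)).symm
  obtain ⟨hexists, hnorm⟩ := hsolve L
  refine ⟨(existsUnique_congr hsol).2 hexists, fun up hup => ?_⟩
  let x : WeightedProd V c' := up
  have hx : ‖x‖ ≤ K * √(‖F‖ ^ 2 + NG ^ 2) := (hnorm x ((hsol x).1 hup)).trans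
    (mul_le_mul_of_nonneg_left (LinearMap.mkContinuous_norm_le _ (Real.sqrt_nonneg _) _) hK.le)
  calc ‖up.1‖ ^ 2 + ‖up.2‖ ^ 2 + t ^ 2 * c up.2 up.2 = ‖x‖ ^ 2 := (WeightedProd.norm_sq c' x).symm
    _ ≤ (K * √(‖F‖ ^ 2 + NG ^ 2)) ^ 2 := by gcongr
    _ = K ^ 2 * (‖F‖ ^ 2 + NG ^ 2) := by rw [mul_pow, Real.sq_sqrt (by positivity)]

/-- Extended Babuška–Brezzi–Braess theory for perturbed saddle-point problems. -/
theorem stmt_0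
    {V Q : Type*}
    [NormedAddCommGroup V] [InnerProductSpace ℝ V] [CompleteSpace V]
    [NormedAddCommGroup Q] [InnerProductSpace ℝ Q] [CompleteSpace Q]
    (a : V →ₗ[ℝ] V →ₗ[ℝ] ℝ) (b : V →ₗ[ℝ] Q →ₗ[ℝ] ℝ) (c : Q →ₗ[ℝ] Q →ₗ[ℝ] ℝ)
    (Ca Cb : ℝ)
    (ha_cont : ∀ u v, |a u v| ≤ Ca * ‖u‖ * ‖v‖)
    (ha_symm : ∀ u v, a u v = a v u)
    (ha_psd : ∀ v, 0 ≤ a v v)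
    (hb_cont : ∀ v q, |b v q| ≤ Cb * ‖v‖ * ‖q‖)
    (hc_symm : ∀ p q, c p q = c q p)
    (hc_psd : ∀ q, 0 ≤ c q q)
    (t : ℝ) (ht0 : 0 ≤ t) (ht1 : t ≤ 1)
    (wnorm : Q → ℝ)
    (hw : ∀ q, wnorm q = Real.sqrt (‖q‖ ^ 2 + t ^ 2 * c q q))
    -- Q is complete with respect to the weighted norm
    (hQcomplete : ∀ f : ℕ → Q,
      (∀ ε > (0 : ℝ), ∃ N, ∀ m ≥ N, ∀ n ≥ N, wnorm (f m - f n) < ε) →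
      ∃ q : Q, ∀ ε > (0 : ℝ), ∃ N, ∀ n ≥ N, wnorm (f n - q) < ε)
    (α β γ : ℝ) (hα : 0 < α) (hβ : 0 < β) (hγ : 0 < γ)
    -- (i) coercivity of a on the kernel of B
    (hker : ∀ v : V, (∀ q : Q, b v q = 0) → α * ‖v‖ ^ 2 ≤ a v v)
    -- (ii) inf-sup condition for b
    (hinfsup : ∀ q : Q, β * ‖q‖ ≤ ⨆ v : {v : V // v ≠ 0}, b v.1 q / ‖v.1‖)
    -- (iii) Braess condition
    (hbraess : ∀ u : V, γ * ‖u‖ ≤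
      ⨆ vq : {vq : V × Q // vq ≠ 0},
        (a u vq.1.1 + b u vq.1.2) /
          Real.sqrt (‖vq.1.1‖ ^ 2 + ‖vq.1.2‖ ^ 2 + t ^ 2 * c vq.1.2 vq.1.2)) :
    ∃ C : ℝ, 0 < C ∧
      ∀ (F : V →L[ℝ] ℝ) (G : Q → ℝ), IsLinearMap ℝ G →
      ∀ NG : ℝ, (∀ q, |G q| ≤ NG * wnorm q) →
      (∃! up : V × Q,
          (∀ v, a up.1 v + b v up.2 = F v) ∧
          (∀ q, b up.1 q - t ^ 2 * c up.2 q = G q)) ∧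
      (∀ up : V × Q,
          ((∀ v, a up.1 v + b v up.2 = F v) ∧
           (∀ q, b up.1 q - t ^ 2 * c up.2 q = G q)) →
          ‖up.1‖ ^ 2 + ‖up.2‖ ^ 2 + t ^ 2 * c up.2 up.2 ≤ C * (‖F‖ ^ 2 + NG ^ 2)) :=
  stmt_0_general a b c Ca Cb ha_cont ha_symm ha_psd hb_cont hc_symm hc_psd t wnorm hw hQcomplete β γ
    hβ hγ hinfsup hbraess
end

section
/- Let V₂ be a Hilbert space with norm ‖ζ‖²_{V₂} = ‖ζ‖²_{𝕄} + M‖div ζ‖²_{L²} where ‖·‖_{𝕄} is the norm induced by a coercive bounded symmetric bilinear form a₂ on V₂ (a₂(ζ,ζ) = ‖ζ‖²_{𝕄}), M ≥ 1, and θ ∈ (0, 1/M]. Define b₂(ξ,ψ) = ∫_Ω ψ div ξ, c₂(φ,ψ) = ∫_Ω φψ, and the product norm ‖(ξ,ψ)‖² = ‖ξ‖²_{V₂} + (1/M)‖ψ‖²_{L²} + θ‖ψ‖²_{L²}. Then for every ζ ∈ V₂, choosing ξ = ζ and φ = M div ζ yields a₂(ζ,ζ) + b₂(ζ, M div ζ)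 = ‖ζ‖²_{V₂} and ‖(ζ, M div ζ)‖² ≤ C‖ζ‖²_{V₂} for an absolute constant C, hence the inf-sup estimate ‖ζ‖_{V₂} ≲ sup_{(ξ,φ)≠0} (a₂(ζ,ξ) + b₂(ζ,φ))/‖(ξ,φ)‖ holds uniformly in M and θ. -/
open scoped RealInnerProductSpace

/-!
Testing with `(ξ, φ) = (ζ, M div ζ)` makes the numerator equal to `‖ζ‖²_{V₂}`, while `θ M ≤ 1`
gives `‖(ζ, M div ζ)‖² ≤ 3 ‖ζ‖²_{V₂}`; so this single quotient is already `≥ ‖ζ‖_{V₂} / √3`.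
For the supremum over reals to dominate it, the family must be bounded above (otherwise `⨆` is
the junk value `0`): by Cauchy–Schwarz for the semidefinite form `a₂` and in `Q`, every quotient
is at most `‖ζ‖_{V₂}`.
-/

theorem Real.add_le_sqrt_add_mul_sqrt_add {u v p q r s : ℝ} (hp : 0 ≤ p) (hq : 0 ≤ q)
    (hr : 0 ≤ r) (hs : 0 ≤ s) (hu : u ^ 2 ≤ p * r) (hv : v ^ 2 ≤ q * s) :
    u + v ≤ √(p + q) * √(r + s) := by
  rw [← Real.sqrt_mul (by positivity)]
  refine (le_abs_self _).trans (Real.abs_le_sqrt ?_)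
  have hcross : (2 * (u * v)) ^ 2 ≤ (p * s + q * r) ^ 2 := by
    nlinarith [mul_le_mul hu hv (sq_nonneg v) (mul_nonneg hp hr), sq_nonneg (p * s - q * r)]
  have := (abs_le_of_sq_le_sq' hcross (by positivity)).2
  nlinarith

theorem Real.sqrt_le_sqrt_mul_div_sqrt {N S c : ℝ} (hN : 0 ≤ N) (hNS : N ≤ S)
    (hSc : S ≤ c * N) : √N ≤ √c * (N / √S) := by
  rcases hN.eq_or_lt with rfl | hN
  · simp
  have hS : 0 < √S := Real.sqrt_pos.2 (hN.trans_le hNS)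
  rw [mul_div_assoc', le_div_iff₀ hS, ← Real.sqrt_mul hN.le]
  calc √(N * S) ≤ √(N * (c * N)) := Real.sqrt_le_sqrt (by gcongr)
    _ = √c * N := by
      rw [mul_left_comm, Real.sqrt_mul' _ (mul_self_nonneg N), Real.sqrt_mul_self hN.le]

section MixedForm

variable {V Q : Type*} [AddCommGroup V] [Module ℝ V] [NormedAddCommGroup Q]
  [InnerProductSpace ℝ Q] (a : LinearMap.BilinForm ℝ V) (D : V →ₗ[ℝ] Q) (M θ : ℝ)

noncomputable section

/-- `‖ζ‖²_{V₂} = a₂(ζ, ζ) + M ‖div ζ‖²`. -/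
def mixedNormSq (ζ : V) : ℝ := a ζ ζ + M * ‖D ζ‖ ^ 2

def productNormSq (p : V × Q) : ℝ :=
  mixedNormSq a D M p.1 + (1 / M) * ‖p.2‖ ^ 2 + θ * ‖p.2‖ ^ 2

/-- `a₂(ζ, ξ) + b₂(ζ, φ)`, the bilinear form of the inf-sup condition. -/
def braessForm (ζ : V) (p : V × Q) : ℝ := a ζ p.1 + ⟪D ζ, p.2⟫

end

variable {a D M θ}

theorem mixedNormSq_nonneg (ha : ∀ x, 0 ≤ a x x) (hM : 0 ≤ M) (ζ : V) :
    0 ≤ mixedNormSq a D M ζ :=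
  add_nonneg (ha ζ) (by positivity)

theorem braessForm_le_sqrt_mul_sqrt (ha : ∀ x, 0 ≤ a x x) (hsymm : LinearMap.IsSymm a)
    (hM : 0 < M) (hθ : 0 ≤ θ) (ζ : V) (p : V × Q) :
    braessForm a D ζ p ≤ √(mixedNormSq a D M ζ) * √(productNormSq a D M θ p) := by
  obtain ⟨ξ, φ⟩ := p
  have hinner : ⟪D ζ, φ⟫ ^ 2 ≤ M * ‖D ζ‖ ^ 2 * ((1 / M) * ‖φ‖ ^ 2) := by
    rw [mul_mul_mul_comm, mul_one_div_cancel hM.ne', one_mul, ← mul_pow]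
    exact sq_le_sq' (neg_le_of_abs_le (abs_real_inner_le_norm _ _)) (real_inner_le_norm _ _)
  calc braessForm a D ζ (ξ, φ)
      ≤ √(mixedNormSq a D M ζ) * √(a ξ ξ + (1 / M) * ‖φ‖ ^ 2) :=
        Real.add_le_sqrt_add_mul_sqrt_add (ha ζ) (by positivity) (ha ξ) (by positivity)
          (a.apply_sq_le_of_symm ha hsymm ζ ξ) hinner
    _ ≤ √(mixedNormSq a D M ζ) * √(productNormSq a D M θ (ξ, φ)) := by
        gcongr
        simp only [productNormSq, mixedNormSq]
        nlinarith [sq_nonneg ‖D ξ‖, sq_nonneg ‖φ‖]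

theorem braessForm_div_le_sqrt (ha : ∀ x, 0 ≤ a x x) (hsymm : LinearMap.IsSymm a)
    (hM : 0 < M) (hθ : 0 ≤ θ) (ζ : V) (p : V × Q) :
    braessForm a D ζ p / √(productNormSq a D M θ p) ≤ √(mixedNormSq a D M ζ) :=
  div_le_of_le_mul₀ (Real.sqrt_nonneg _) (Real.sqrt_nonneg _)
    (braessForm_le_sqrt_mul_sqrt ha hsymm hM hθ ζ p)

theorem braessForm_smul_self (ζ : V) :
    braessForm a D ζ (ζ, M • D ζ) = mixedNormSq a D M ζ := by
  rw [braessForm, mixedNormSq, real_inner_smul_right, real_inner_self_eq_norm_sq]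

theorem productNormSq_smul_self_le (hM : 0 < M) (hθM : θ ≤ 1 / M) (ha : ∀ x, 0 ≤ a x x)
    (ζ : V) :
    productNormSq a D M θ (ζ, M • D ζ) ≤ 3 * mixedNormSq a D M ζ := by
  have hθM : θ * M ≤ 1 := (le_div_iff₀ hM).1 hθM
  have hD : 0 ≤ M * ‖D ζ‖ ^ 2 := by positivity
  simp only [productNormSq, mixedNormSq, norm_smul, Real.norm_of_nonneg hM.le, mul_pow]
  field_simp
  nlinarith [ha ζ, mul_le_mul_of_nonneg_right hθM hD]

theorem sqrt_mixedNormSq_le_three_mul_iSup (ha : ∀ x, 0 ≤ a x x) (hsymm : LinearMap.IsSymm a)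
    (hM : 0 < M) (hθ : 0 ≤ θ) (hθM : θ ≤ 1 / M) (ζ : V) :
    √(mixedNormSq a D M ζ) ≤
      3 * ⨆ p : {p : V × Q // p ≠ 0}, braessForm a D ζ p / √(productNormSq a D M θ p) := by
  rcases eq_or_ne ζ 0 with rfl | hζ
  · simp [mixedNormSq, braessForm]
  set N := mixedNormSq a D M ζ
  set S₀ := productNormSq a D M θ (ζ, M • D ζ)
  have hN : 0 ≤ N := mixedNormSq_nonneg ha hM.le ζ
  have hNS₀ : N ≤ S₀ := by
    simp only [S₀, productNormSq]
    nlinarith [sq_nonneg ‖M • D ζ‖, one_div_pos.2 hM]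
  have hbdd : BddAbove (Set.range fun p : {p : V × Q // p ≠ 0} =>
      braessForm a D ζ p / √(productNormSq a D M θ p)) :=
    ⟨√N, Set.forall_mem_range.2 fun p => braessForm_div_le_sqrt (D := D) ha hsymm hM hθ ζ p⟩
  let p₀ : {p : V × Q // p ≠ 0} := ⟨(ζ, M • D ζ), fun h => hζ (congrArg Prod.fst h)⟩
  calc √N ≤ √3 * (N / √S₀) :=
        Real.sqrt_le_sqrt_mul_div_sqrt hN hNS₀ (productNormSq_smul_self_le hM hθM ha ζ)
    _ ≤ 3 * (N / √S₀) := by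
        gcongr
        rw [Real.sqrt_le_left (by norm_num)]
        norm_num
    _ = 3 * (braessForm a D ζ p₀ / √(productNormSq a D M θ p₀)) := by
        rw [braessForm_smul_self]
    _ ≤ 3 * _ := by gcongr; exact le_ciSup hbdd p₀

end MixedForm

/-- Verification of the Braess inf-sup condition for the mixed reaction-diffusion
sub-problem, uniformly in M ≥ 1 and θ ∈ (0, 1/M]. -/
theorem stmt_2 :
    ∃ C : ℝ, 0 < C ∧
      ∀ (V₂ Q : Type)
        [NormedAddCommGroup V₂] [InnerProductSpace ℝ V₂] [CompleteSpace V₂]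
        [NormedAddCommGroup Q] [InnerProductSpace ℝ Q] [CompleteSpace Q]
        (M θ : ℝ), 1 ≤ M → 0 < θ → θ ≤ 1 / M →
        ∀ (a₂ : V₂ →ₗ[ℝ] V₂ →ₗ[ℝ] ℝ) (D : V₂ →ₗ[ℝ] Q),
        -- a₂ symmetric, bounded and coercive (it induces the norm ‖·‖_𝕄)
        (∀ ζ ξ, a₂ ζ ξ = a₂ ξ ζ) →
        (∀ ζ, 0 ≤ a₂ ζ ζ) →
        (∃ Λ : ℝ, 0 < Λ ∧ ∀ ζ ξ, |a₂ ζ ξ| ≤ Λ * ‖ζ‖ * ‖ξ‖) →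
        (∃ α : ℝ, 0 < α ∧ ∀ ζ, α * ‖ζ‖ ^ 2 ≤ a₂ ζ ζ) →
        ∀ ζ : V₂,
          -- with ξ = ζ and φ = M div ζ:
          (a₂ ζ ζ + ⟪D ζ, (M : ℝ) • D ζ⟫ = a₂ ζ ζ + M * ‖D ζ‖ ^ 2) ∧
          -- ‖(ζ, M div ζ)‖² ≤ C ‖ζ‖²_{V₂}
          ((a₂ ζ ζ + M * ‖D ζ‖ ^ 2) +
              (1 / M) * ‖(M : ℝ) • D ζ‖ ^ 2 + θ * ‖(M : ℝ) • D ζ‖ ^ 2 ≤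
            C * (a₂ ζ ζ + M * ‖D ζ‖ ^ 2)) ∧
          -- hence the uniform inf-sup estimate
          (Real.sqrt (a₂ ζ ζ + M * ‖D ζ‖ ^ 2) ≤
            C * ⨆ xp : {xp : V₂ × Q // xp ≠ 0},
              (a₂ ζ xp.1.1 + ⟪D ζ, xp.1.2⟫) /
                Real.sqrt ((a₂ xp.1.1 xp.1.1 + M * ‖D xp.1.1‖ ^ 2) +
                  (1 / M) * ‖xp.1.2‖ ^ 2 + θ * ‖xp.1.2‖ ^ 2)) := by
  refine ⟨3, by norm_num, ?_⟩
  intro V₂ Q _ _ _ _ _ _ M θ hM hθ hθM a₂ D hsymm ha _ _ ζ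
  have hM₀ : 0 < M := one_pos.trans_le hM
  exact ⟨braessForm_smul_self ζ, productNormSq_smul_self_le hM₀ hθM ha ζ,
    sqrt_mixedNormSq_le_three_mul_iSup ha ⟨hsymm⟩ hM₀ hθ.le hθM ζ⟩
end

section
/- Let 𝕄⁻¹ be Lipschitz in its arguments: ‖𝕄⁻¹(τ₁,r₁) − 𝕄⁻¹(τ₂,r₂)‖_{L^∞} ≤ L_𝕄(‖τ₁−τ₂‖_{L²} + ‖r₁−r₂‖_{L²}) (up to the product norm), and suppose each linearized mixed diffusion problem (with diffusion coefficient 𝕄⁻¹(ε(wᵢ),rᵢ)) is well-posed with parameter-independent stability constant C₂ in the weighted norms. Then the solution operator S₂ : (w,r̃) ↦ (ζ,φ) satisfies ‖S₂(w₁,r̃₁) − S₂(w₂,r̃₂)‖_{V₂×Q₂} ≤ max{1/√(2μ), √(2μ)} M^{3/2} C₂² L_𝕄 (‖φ_D‖_{1/2,Γ_D} + ‖g‖_{L²}) ‖(w₁,r̃₁) − (w₂,r̃₂)‖_{V₁×Q₁}. -/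
/-!
The difference of two solutions of the mixed diffusion problem solves the problem with the
first coefficient and the right-hand side `ξ ↦ ⟪(A₂ - A₁) ζ₂, ξ⟫`, so the stability estimate
bounds it by `C₂` times the dual norm of that functional. By Cauchy–Schwarz and the comparison
`‖·‖ ≤ √M ‖·‖_{V₂}` (used twice), that dual norm is at most `M ‖A₂ - A₁‖ ‖ζ₂‖_{V₂}`, where
`‖A₂ - A₁‖` is controlled by the Lipschitz bound on `𝕄⁻¹` and `‖ζ₂‖_{V₂}` by the a priori bound.
Finally the unweighted `L²` distance of the arguments is at most `max (1/√(2μ)) √(2μ)` times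
their `V₁ × Q₁` distance.
-/

open scoped RealInnerProductSpace

section MixedProblem

variable {E Q : Type*} [NormedAddCommGroup E] [InnerProductSpace ℝ E]
  [NormedAddCommGroup Q] [InnerProductSpace ℝ Q]

def IsMixedSolution (D : E →ₗ[ℝ] Q) (θ : ℝ) (A : E →L[ℝ] E) (F : E → ℝ) (G : Q → ℝ)
    (ζ : E) (φ : Q) : Prop :=
  (∀ ξ, ⟪A ζ, ξ⟫ + ⟪D ξ, φ⟫ = F ξ) ∧ ∀ ψ, ⟪D ζ, ψ⟫ - θ * ⟪φ, ψ⟫ = G ψ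

theorem IsMixedSolution.sub {D : E →ₗ[ℝ] Q} {θ : ℝ} {A₁ A₂ : E →L[ℝ] E} {F : E → ℝ}
    {G : Q → ℝ} {ζ₁ ζ₂ : E} {φ₁ φ₂ : Q} (h₁ : IsMixedSolution D θ A₁ F G ζ₁ φ₁)
    (h₂ : IsMixedSolution D θ A₂ F G ζ₂ φ₂) :
    IsMixedSolution D θ A₁ (fun ξ => ⟪(A₂ - A₁) ζ₂, ξ⟫) 0 (ζ₁ - ζ₂) (φ₁ - φ₂) := by
  constructor
  · intro ξ
    have e₁ := h₁.1 ξ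
    have e₂ := h₂.1 ξ
    simp only [map_sub, inner_sub_left, inner_sub_right, sub_apply] at e₁ e₂ ⊢
    linarith
  · intro ψ
    have e₁ := h₁.2 ψ
    have e₂ := h₂.2 ψ
    simp only [map_sub, inner_sub_left, Pi.zero_apply]
    linear_combination e₁ - e₂

end MixedProblem

theorem abs_inner_apply_le_of_le_sqrt_mul {E : Type*} [NormedAddCommGroup E]
    [InnerProductSpace ℝ E] {M β K v : ℝ} (hM : 0 ≤ M) {B : E →L[ℝ] E} (hB : ‖B‖ ≤ β)
    {ζ ξ : E} (hζ : ‖ζ‖ ≤ √M * K) (hξ : ‖ξ‖ ≤ √M * v) :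
    |⟪B ζ, ξ⟫| ≤ M * β * K * v := by
  have hBζ : ‖B ζ‖ ≤ β * (√M * K) :=
    (B.le_opNorm ζ).trans
      (mul_le_mul hB hζ (norm_nonneg _) ((norm_nonneg _).trans hB))
  calc |⟪B ζ, ξ⟫| ≤ ‖B ζ‖ * ‖ξ‖ := abs_real_inner_le_norm _ _
    _ ≤ β * (√M * K) * (√M * v) :=
        mul_le_mul hBζ hξ (norm_nonneg _) ((norm_nonneg _).trans hBζ)
    _ = (√M * √M) * β * K * v := by ring
    _ = M * β * K * v := by rw [Real.mul_self_sqrt hM]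

theorem le_sqrt_sq_add_sq (x y : ℝ) : x ≤ √(x ^ 2 + y ^ 2) :=
  (le_abs_self x).trans (Real.abs_le_sqrt (by nlinarith [sq_nonneg y]))

theorem sqrt_sq_add_sq_le_max_mul {c κ : ℝ} (hc : 0 < c) (hκ : 0 ≤ κ) (a b : ℝ) :
    √(a ^ 2 + b ^ 2) ≤
      max (1 / √c) √c * √((√c * a) ^ 2 + √(1 / c * b ^ 2 + κ * b ^ 2) ^ 2) := by
  set m := max (1 / √c) √c
  have hsqrt_c : 0 < √c := Real.sqrt_pos.mpr hc
  have hm : 0 < m := hsqrt_c.trans_le (le_max_right _ _)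
  have hm_inv : 1 ≤ m * √c := by
    have := le_max_left (1 / √c) √c
    rwa [div_le_iff₀ hsqrt_c] at this
  have hm_sq : 1 ≤ m ^ 2 * c := by
    rw [← Real.sq_sqrt hc.le]
    nlinarith
  have hc_le : c ≤ m ^ 2 := by
    rw [← Real.sq_sqrt hc.le]
    exact pow_le_pow_left₀ hsqrt_c.le (le_max_right _ _) 2
  have hm_sq_div : 1 ≤ m ^ 2 * (1 / c) := by
    rwa [mul_one_div, le_div_iff₀ hc, one_mul]
  have ha : a ^ 2 ≤ m ^ 2 * (c * a ^ 2) := by nlinarith [sq_nonneg a]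
  have hb : b ^ 2 ≤ m ^ 2 * (1 / c * b ^ 2) := by nlinarith [sq_nonneg b]
  rw [mul_pow, Real.sq_sqrt hc.le, Real.sq_sqrt (by positivity),
    ← Real.sqrt_sq hm.le, ← Real.sqrt_mul (sq_nonneg m)]
  apply Real.sqrt_le_sqrt
  nlinarith [mul_nonneg (sq_nonneg m) (mul_nonneg hκ (sq_nonneg b))]

/-- `V₁` is the displacement space, `T` the L² tensor space of strains,
`E` the L² flux space and `Q` the L² concentration space; `A (τ,r)` is the
multiplication operator by the matrix field 𝕄⁻¹(τ,r), `D` is the divergence. -/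
theorem stmt_8_general
    {V₁ T E Q : Type*}
    [NormedAddCommGroup V₁] [InnerProductSpace ℝ V₁]
    [NormedAddCommGroup T] [InnerProductSpace ℝ T]
    [NormedAddCommGroup E] [InnerProductSpace ℝ E]
    [NormedAddCommGroup Q] [InnerProductSpace ℝ Q]
    (μ lam M θ : ℝ) (hμ : 0 < μ) (hlam : 1 ≤ lam) (hM : 1 ≤ M)
    (eps : V₁ →ₗ[ℝ] T) (D : E →ₗ[ℝ] Q)
    (A : T × Q → E →L[ℝ] E)
    -- Lipschitz continuity of 𝕄⁻¹ (L∞ norm ↔ operator norm, product L² norm)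
    (L𝕄 : ℝ) (hL𝕄 : 0 ≤ L𝕄)
    (hALip : ∀ s t : T × Q,
      ‖A s - A t‖ ≤ L𝕄 * Real.sqrt (‖s.1 - t.1‖ ^ 2 + ‖s.2 - t.2‖ ^ 2))
    -- weighted norms
    (Vn : E → ℝ) (hVn : ∀ ξ, ‖ξ‖ ≤ Real.sqrt M * Vn ξ)
    (Q₂n : Q → ℝ)
    (V₁n : V₁ → ℝ) (hV₁n : ∀ w, V₁n w = Real.sqrt (2 * μ) * ‖eps w‖)
    (Q₁n : Q → ℝ)
    (hQ₁n : ∀ r, Q₁n r = Real.sqrt ((1 / (2 * μ)) * ‖r‖ ^ 2 + (1 / lam) * ‖r‖ ^ 2))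
    -- data of the mixed diffusion problem
    (F₂ : E → ℝ) (G₂ : Q → ℝ)
    (φD g : ℝ) (hφD : 0 ≤ φD) (hg : 0 ≤ g)
    -- the solution operator S₂ : (w, r̃) ↦ (ζ, φ)
    (S₂ : V₁ × Q → E × Q)
    (hsol : ∀ p : V₁ × Q,
      (∀ ξ, ⟪A (eps p.1, p.2) (S₂ p).1, ξ⟫ + ⟪D ξ, (S₂ p).2⟫ = F₂ ξ) ∧
      (∀ ψ, ⟪D (S₂ p).1, ψ⟫ - θ * ⟪(S₂ p).2, ψ⟫ = G₂ ψ))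
    -- parameter-independent well-posedness with stability constant C₂
    (C₂ : ℝ) (hC₂ : 0 < C₂)
    (hstab : ∀ (s : T × Q) (ζ : E) (φ : Q) (F : E → ℝ) (NF : ℝ),
      (∀ ξ, ⟪A s ζ, ξ⟫ + ⟪D ξ, φ⟫ = F ξ) →
      (∀ ψ, ⟪D ζ, ψ⟫ - θ * ⟪φ, ψ⟫ = 0) →
      (∀ ξ, |F ξ| ≤ NF * Vn ξ) →
      Real.sqrt ((Vn ζ) ^ 2 + (Q₂n φ) ^ 2) ≤ C₂ * NF)
    -- a priori bound for solutions in terms of the data ‖φ_D‖_{1/2,Γ_D} and ‖g‖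
    (hapriori : ∀ p : V₁ × Q,
      Real.sqrt ((Vn (S₂ p).1) ^ 2 + (Q₂n (S₂ p).2) ^ 2) ≤ C₂ * (φD + g)) :
    ∀ p q : V₁ × Q,
      Real.sqrt ((Vn ((S₂ p).1 - (S₂ q).1)) ^ 2 + (Q₂n ((S₂ p).2 - (S₂ q).2)) ^ 2) ≤
        max (1 / Real.sqrt (2 * μ)) (Real.sqrt (2 * μ)) * Real.sqrt (M ^ 3) *
          C₂ ^ 2 * L𝕄 * (φD + g) *
          Real.sqrt ((V₁n (p.1 - q.1)) ^ 2 + (Q₁n (p.2 - q.2)) ^ 2) := by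
  intro p q
  set m := max (1 / Real.sqrt (2 * μ)) (Real.sqrt (2 * μ))
  set W := Real.sqrt ((V₁n (p.1 - q.1)) ^ 2 + (Q₁n (p.2 - q.2)) ^ 2)
  have hW : ‖A (eps p.1, p.2) - A (eps q.1, q.2)‖ ≤ L𝕄 * (m * W) := by
    refine (hALip _ _).trans (mul_le_mul_of_nonneg_left ?_ hL𝕄)
    rw [← map_sub]
    simp only [W, hV₁n, hQ₁n]
    exact sqrt_sq_add_sq_le_max_mul (by positivity) (by positivity) _ _
  have hζq : ‖(S₂ q).1‖ ≤ Real.sqrt M * (C₂ * (φD + g)) :=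
    (hVn _).trans (mul_le_mul_of_nonneg_left
      ((le_sqrt_sq_add_sq _ _).trans (hapriori q)) (Real.sqrt_nonneg M))
  have hdiff := IsMixedSolution.sub (hsol p) (hsol q)
  have hM32 : M ≤ Real.sqrt (M ^ 3) :=
    (Real.le_sqrt (by positivity) (by positivity)).mpr (pow_le_pow_right₀ hM (by norm_num))
  calc _ ≤ C₂ * (M * (L𝕄 * (m * W)) * (C₂ * (φD + g))) :=
        hstab _ _ _ _ _ hdiff.1 hdiff.2 fun ξ =>
          abs_inner_apply_le_of_le_sqrt_mul (by positivity) (by rwa [norm_sub_rev]) hζq (hVn ξ)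
    _ ≤ C₂ * (Real.sqrt (M ^ 3) * (L𝕄 * (m * W)) * (C₂ * (φD + g))) := by gcongr
    _ = m * Real.sqrt (M ^ 3) * C₂ ^ 2 * L𝕄 * (φD + g) * W := by ring

/-- Lipschitz continuity of the diffusion solution operator S₂ (Lemma 3.5).
`V₁` is the displacement space, `T` the L² tensor space of strains,
`E` the L² flux space and `Q` the L² concentration space; `A (τ,r)` is the
multiplication operator by the matrix field 𝕄⁻¹(τ,r), `D` is the divergence. -/
theorem stmt_8
    {V₁ T E Q : Type*}
    [NormedAddCommGroup V₁] [InnerProductSpace ℝ V₁] [CompleteSpace V₁]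
    [NormedAddCommGroup T] [InnerProductSpace ℝ T] [CompleteSpace T]
    [NormedAddCommGroup E] [InnerProductSpace ℝ E] [CompleteSpace E]
    [NormedAddCommGroup Q] [InnerProductSpace ℝ Q] [CompleteSpace Q]
    (μ lam M θ : ℝ) (hμ : 0 < μ) (hlam : 1 ≤ lam) (hM : 1 ≤ M) (hθ : 0 < θ)
    (eps : V₁ →ₗ[ℝ] T) (D : E →ₗ[ℝ] Q)
    (A : T × Q → E →L[ℝ] E)
    -- Lipschitz continuity of 𝕄⁻¹ (L∞ norm ↔ operator norm, product L² norm)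
    (L𝕄 : ℝ) (hL𝕄 : 0 ≤ L𝕄)
    (hALip : ∀ s t : T × Q,
      ‖A s - A t‖ ≤ L𝕄 * Real.sqrt (‖s.1 - t.1‖ ^ 2 + ‖s.2 - t.2‖ ^ 2))
    -- weighted norms
    (Vn : E → ℝ) (hVn : ∀ ξ, ‖ξ‖ ≤ Real.sqrt M * Vn ξ)
    (Q₂n : Q → ℝ) (hQ₂n : ∀ ψ, Q₂n ψ = Real.sqrt ((1 / M) * ‖ψ‖ ^ 2 + θ * ‖ψ‖ ^ 2))
    (V₁n : V₁ → ℝ) (hV₁n : ∀ w, V₁n w = Real.sqrt (2 * μ) * ‖eps w‖)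
    (Q₁n : Q → ℝ)
    (hQ₁n : ∀ r, Q₁n r = Real.sqrt ((1 / (2 * μ)) * ‖r‖ ^ 2 + (1 / lam) * ‖r‖ ^ 2))
    -- data of the mixed diffusion problem
    (F₂ : E → ℝ) (G₂ : Q → ℝ)
    (φD g : ℝ) (hφD : 0 ≤ φD) (hg : 0 ≤ g)
    -- the solution operator S₂ : (w, r̃) ↦ (ζ, φ)
    (S₂ : V₁ × Q → E × Q)
    (hsol : ∀ p : V₁ × Q,
      (∀ ξ, ⟪A (eps p.1, p.2) (S₂ p).1, ξ⟫ + ⟪D ξ, (S₂ p).2⟫ = F₂ ξ) ∧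
      (∀ ψ, ⟪D (S₂ p).1, ψ⟫ - θ * ⟪(S₂ p).2, ψ⟫ = G₂ ψ))
    -- parameter-independent well-posedness with stability constant C₂
    (C₂ : ℝ) (hC₂ : 0 < C₂)
    (hstab : ∀ (s : T × Q) (ζ : E) (φ : Q) (F : E → ℝ) (NF : ℝ),
      (∀ ξ, ⟪A s ζ, ξ⟫ + ⟪D ξ, φ⟫ = F ξ) →
      (∀ ψ, ⟪D ζ, ψ⟫ - θ * ⟪φ, ψ⟫ = 0) →
      (∀ ξ, |F ξ| ≤ NF * Vn ξ) →
      Real.sqrt ((Vn ζ) ^ 2 + (Q₂n φ) ^ 2) ≤ C₂ * NF)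
    -- a priori bound for solutions in terms of the data ‖φ_D‖_{1/2,Γ_D} and ‖g‖
    (hapriori : ∀ p : V₁ × Q,
      Real.sqrt ((Vn (S₂ p).1) ^ 2 + (Q₂n (S₂ p).2) ^ 2) ≤ C₂ * (φD + g)) :
    ∀ p q : V₁ × Q,
      Real.sqrt ((Vn ((S₂ p).1 - (S₂ q).1)) ^ 2 + (Q₂n ((S₂ p).2 - (S₂ q).2)) ^ 2) ≤
        max (1 / Real.sqrt (2 * μ)) (Real.sqrt (2 * μ)) * Real.sqrt (M ^ 3) *
          C₂ ^ 2 * L𝕄 * (φD + g) *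
          Real.sqrt ((V₁n (p.1 - q.1)) ^ 2 + (Q₁n (p.2 - q.2)) ^ 2) :=
  stmt_8_general μ lam M θ hμ hlam hM eps D A L𝕄 hL𝕄 hALip Vn hVn Q₂n V₁n hV₁n Q₁n hQ₁n F₂ G₂ φD g
    hφD hg S₂ hsol C₂ hC₂ hstab hapriori
end

section
/- Under the assumptions that the elasticity solution operator S₁ is Lipschitz with constant L_{S₁} = √M C₁ L_ℓ, the diffusion solution operator S₂ is Lipschitz with constant L_{S₂} = max{1/√(2μ),√(2μ)} M^{3/2} C₂² L_𝕄 (‖φ_D‖_{1/2,Γ_D} + ‖g‖_{L²}), and the small-data condition C₁ L_ℓ max{1/√(2μ),√(2μ)} M² C₂² L_𝕄 (‖φ_D‖_{1/2,Γ_D} + ‖g‖_{L²}) < 1 holds, the map A = S₂₂ ∘ S₁ has a unique fixed point in the closed ball W = {w ∈ Q₂ : ‖w‖_{Q₂} ≤ √M C₂(‖φ_D‖_{1/2,Γ_D} + ‖g‖_{L²})}, and equivalently the coupled stress-assisted diffusion problem has a unique weak solution (u, p̃, ζ, φ). -/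
/-! Banach's fixed-point theorem: the Lipschitz constant of `A` is `L_{S₂} L_{S₁}`, which after
`√(M³) √M = M²` is exactly the small-data quantity, so `A` is a contraction; its range lies in `W`,
hence so does its fixed point. -/

theorem Real.sqrt_pow_three_mul_sqrt {M : ℝ} (hM : 0 ≤ M) : √(M ^ 3) * √M = M ^ 2 := by
  rw [← Real.sqrt_mul (by positivity), show M ^ 3 * M = (M ^ 2) ^ 2 by ring,
    Real.sqrt_sq (by positivity)]

theorem existsUnique_isFixedPt_of_dist_le_mul {X : Type*} [MetricSpace X] [CompleteSpace X]
    [Nonempty X] {A : X → X} {k : ℝ} (hk : k < 1)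
    (hA : ∀ x y, dist (A x) (A y) ≤ k * dist x y) : ∃! x, A x = x := by
  have hlip : LipschitzWith k.toNNReal A := LipschitzWith.of_dist_le_mul fun x y =>
    (hA x y).trans (mul_le_mul_of_nonneg_right (Real.le_coe_toNNReal k) dist_nonneg)
  have hcontr : ContractingWith k.toNNReal A :=
    ⟨by simpa [Real.toNNReal_lt_one] using hk, hlip⟩
  exact ⟨hcontr.fixedPoint A, hcontr.fixedPoint_isFixedPt, fun y hy => hcontr.fixedPoint_unique hy⟩

theorem stmt_9_general
    {Z : Type*} [NormedAddCommGroup Z] [CompleteSpace Z]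
    (A : Z → Z)
    (C₁ C₂ Lℓ L𝕄 M μ φD g : ℝ)
    (hM : 1 ≤ M)
    -- A is Lipschitz with constant L_{S₂}·L_{S₁}
    (hAlip : ∀ x y : Z, ‖A x - A y‖ ≤
      (max (1 / Real.sqrt (2 * μ)) (Real.sqrt (2 * μ)) * Real.sqrt (M ^ 3) *
          C₂ ^ 2 * L𝕄 * (φD + g)) * (Real.sqrt M * C₁ * Lℓ) * ‖x - y‖)
    -- A(Q₂) ⊆ W : the a priori bound
    (hrange : ∀ x : Z, ‖A x‖ ≤ Real.sqrt M * C₂ * (φD + g))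
    -- small-data assumption
    (hsmall : C₁ * Lℓ * max (1 / Real.sqrt (2 * μ)) (Real.sqrt (2 * μ)) *
        M ^ 2 * C₂ ^ 2 * L𝕄 * (φD + g) < 1) :
    (∃! φ : Z, A φ = φ) ∧
      ∀ φ : Z, A φ = φ → ‖φ‖ ≤ Real.sqrt M * C₂ * (φD + g) := by
  have hLip_eq : (max (1 / √(2 * μ)) √(2 * μ) * √(M ^ 3) * C₂ ^ 2 * L𝕄 * (φD + g)) *
      (√M * C₁ * Lℓ) = C₁ * Lℓ * max (1 / √(2 * μ)) √(2 * μ) * M ^ 2 * C₂ ^ 2 * L𝕄 * (φD + g) := by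
    rw [← Real.sqrt_pow_three_mul_sqrt (zero_le_one.trans hM)]
    ring
  have : Nonempty Z := ⟨0⟩
  refine ⟨existsUnique_isFixedPt_of_dist_le_mul (hLip_eq ▸ hsmall) fun x y => ?_,
    fun φ hφ => hφ ▸ hrange φ⟩
  simpa only [dist_eq_norm] using hAlip x y

/-- Theorem 3.7: under the small-data assumption, the fixed-point map
A = S₂₂ ∘ S₁ has a unique fixed point, which lies in the ball W of radius
√M C₂(‖φ_D‖ + ‖g‖); equivalently the coupled problem is uniquely solvable. -/
theorem stmt_9
    {Z : Type*} [NormedAddCommGroup Z] [CompleteSpace Z]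
    (A : Z → Z)
    (C₁ C₂ Lℓ L𝕄 M μ φD g : ℝ)
    (hC₁ : 0 < C₁) (hC₂ : 0 < C₂) (hLℓ : 0 ≤ Lℓ) (hL𝕄 : 0 ≤ L𝕄)
    (hM : 1 ≤ M) (hμ : 0 < μ) (hφD : 0 ≤ φD) (hg : 0 ≤ g)
    -- A is Lipschitz with constant L_{S₂}·L_{S₁}
    (hAlip : ∀ x y : Z, ‖A x - A y‖ ≤
      (max (1 / Real.sqrt (2 * μ)) (Real.sqrt (2 * μ)) * Real.sqrt (M ^ 3) *
          C₂ ^ 2 * L𝕄 * (φD + g)) * (Real.sqrt M * C₁ * Lℓ) * ‖x - y‖)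
    -- A(Q₂) ⊆ W : the a priori bound
    (hrange : ∀ x : Z, ‖A x‖ ≤ Real.sqrt M * C₂ * (φD + g))
    -- small-data assumption
    (hsmall : C₁ * Lℓ * max (1 / Real.sqrt (2 * μ)) (Real.sqrt (2 * μ)) *
        M ^ 2 * C₂ ^ 2 * L𝕄 * (φD + g) < 1) :
    (∃! φ : Z, A φ = φ) ∧
      ∀ φ : Z, A φ = φ → ‖φ‖ ≤ Real.sqrt M * C₂ * (φD + g) :=
  stmt_9_general A C₁ C₂ Lℓ L𝕄 M μ φD g hM hAlip hrange hsmall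
end

section
/- If the discrete elasticity error satisfies ‖(u−u_h, p̃−p̃_h)‖ ≤ C̄₁(E₁ + √M L_ℓ ‖φ − φ_h‖) and the discrete diffusion error satisfies ‖(ζ−ζ_h, φ−φ_h)‖ ≤ C̄₂(E₂ + K‖(u−ū_h, p̃−p̃_h)‖) with K = max{1/√(2μ),√(2μ)} M^{3/2} C̄₂ L_𝕄(‖φ_D‖ + ‖g‖), where E₁, E₂ collect interpolation/projection/data-oscillation terms, and if the compatibility condition C̄₁√M L_ℓ + C̄₂² M^{3/2} L_𝕄 max{1/√(2μ),√(2μ)}(‖φ_D‖+‖g‖) < 1/2 holds, then the total error ē = ‖(u−u_h,p̃−p̃_h)‖ + ‖(ζ−ζ_h,φ−φ_h)‖ satisfies ē ≤ C(E₁ + E₂) with C independent of the physical parameters. -/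
/-- Coupling/absorption argument in Theorem 5.2: the two mutually coupled error
inequalities plus the small-data condition yield a total error bound with a
constant independent of the physical parameters. -/
theorem stmt_18
    (e₁ e₂ E₁ E₂ : ℝ)             -- elasticity/diffusion errors and data terms
    (C₁ C₂ Lℓ L𝕄 M μ φD g : ℝ)    -- stability/Lipschitz constants & parameters
    (he₁ : 0 ≤ e₁) (he₂ : 0 ≤ e₂) (hE₁ : 0 ≤ E₁) (hE₂ : 0 ≤ E₂)
    (hC₁ : 0 < C₁) (hC₂ : 0 < C₂) (hLℓ : 0 ≤ Lℓ) (hL𝕄 : 0 ≤ L𝕄)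
    (hM : 1 ≤ M) (hμ : 0 < μ) (hφD : 0 ≤ φD) (hg : 0 ≤ g)
    -- discrete elasticity error inequality
    (herr1 : e₁ ≤ C₁ * (E₁ + Real.sqrt M * Lℓ * e₂))
    -- discrete diffusion error inequality, with coupling coefficient K
    (herr2 : e₂ ≤ C₂ * (E₂ +
      (max (1 / Real.sqrt (2 * μ)) (Real.sqrt (2 * μ)) * Real.sqrt (M ^ 3) *
        C₂ * L𝕄 * (φD + g)) * e₁))
    -- the small-data / compatibility condition
    (hsmall : C₁ * Real.sqrt M * Lℓ +
        C₂ ^ 2 * Real.sqrt (M ^ 3) * L𝕄 *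
          max (1 / Real.sqrt (2 * μ)) (Real.sqrt (2 * μ)) * (φD + g) <
      1 / 2) :
    e₁ + e₂ ≤ 2 * max C₁ C₂ * (E₁ + E₂) := by
  set mx : ℝ := max (1 / Real.sqrt (2 * μ)) (Real.sqrt (2 * μ)) with hmx
  set a : ℝ := C₁ * Real.sqrt M * Lℓ with ha
  set b : ℝ := C₂ ^ 2 * Real.sqrt (M ^ 3) * L𝕄 * mx * (φD + g) with hb
  have hmx0 : 0 ≤ mx := le_trans (Real.sqrt_nonneg _) (le_max_right _ _)
  have hsM : 0 ≤ Real.sqrt M := Real.sqrt_nonneg _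
  have ha0 : 0 ≤ a := by positivity
  have hb0 : 0 ≤ b := by positivity
  have h1 : e₁ ≤ C₁ * E₁ + a * e₂ := by nlinarith [herr1]
  have h2 : e₂ ≤ C₂ * E₂ + b * e₁ := by nlinarith [herr2]
  have hsum : e₁ + e₂ ≤ C₁ * E₁ + C₂ * E₂ + (a + b) * (e₁ + e₂) := by
    nlinarith
  have hlt : a + b < 1 / 2 := hsmall
  have key : e₁ + e₂ ≤ 2 * (C₁ * E₁ + C₂ * E₂) := by nlinarith
  have hmc1 : C₁ ≤ max C₁ C₂ := le_max_left _ _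
  have hmc2 : C₂ ≤ max C₁ C₂ := le_max_right _ _
  nlinarith
end
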